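/- arXiv:2603.27739 — 7 statements merged into one kernel-verified Lean document; each statement's English description precedes it below -/
import Mathlib

section
/- Fix r ≥ 1 and N > 1. If a positive real x satisfies x^(1/r)(1+x)²/(1+(1+r)x) = Ψ/V with Ψ/V ≥ N(N−1)^(1/r), then x ≥ N−1 (equivalently, x/(1+x) ≥ 1 − 1/N). -/
open Real Set

/-! If `x < N - 1`, dropping the factor `(1 + x) / (1 + (1 + r) x) ≤ 1` and using that
`t ↦ t ^ (1/r) (1 + t)` is strictly increasing gives `Ψ / V < N (N - 1) ^ (1/r)`. -/

lemma strictMonoOn_rpow_mul_one_add {p : ℝ} (hp : 0 < p) :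
    StrictMonoOn (fun t : ℝ => t ^ p * (1 + t)) (Ici 0) := by
  intro a ha b hb hab
  rw [mem_Ici] at ha hb
  exact mul_lt_mul'' (rpow_lt_rpow ha hab hp) (by linarith) (rpow_nonneg ha p) (by linarith)

lemma mul_one_add_sq_div_le {a r x : ℝ} (ha : 0 ≤ a) (hr : 0 ≤ r) (hx : 0 ≤ x) :
    a * (1 + x) ^ 2 / (1 + (1 + r) * x) ≤ a * (1 + x) := by
  rw [div_le_iff₀ (by positivity)]
  nlinarith [mul_nonneg (mul_nonneg ha (by linarith : (0 : ℝ) ≤ 1 + x)) (mul_nonneg hr hx)]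

lemma one_sub_one_div_le_div_one_add {N x : ℝ} (hN : 0 < N) (h : N - 1 ≤ x) :
    1 - 1 / N ≤ x / (1 + x) := by
  rw [show 1 - 1 / N = (N - 1) / N by field_simp, div_le_div_iff₀ hN (by linarith)]
  nlinarith

theorem largePsi_lower_bound_general (r N Ψ V x : ℝ) (hr : 1 ≤ r) (hN : 1 < N)
    (hx : 0 < x)
    (heq : x ^ (1 / r) * (1 + x) ^ 2 / (1 + (1 + r) * x) = Ψ / V)
    (hk : N * (N - 1) ^ (1 / r) ≤ Ψ / V) :
    N - 1 ≤ x ∧ 1 - 1 / N ≤ x / (1 + x) := by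
  have hr0 : 0 < r := by linarith
  have hbound : (N - 1) ^ (1 / r) * (1 + (N - 1)) ≤ x ^ (1 / r) * (1 + x) :=
    calc (N - 1) ^ (1 / r) * (1 + (N - 1)) = N * (N - 1) ^ (1 / r) := by ring
      _ ≤ Ψ / V := hk
      _ = x ^ (1 / r) * (1 + x) ^ 2 / (1 + (1 + r) * x) := heq.symm
      _ ≤ x ^ (1 / r) * (1 + x) :=
        mul_one_add_sq_div_le (rpow_nonneg hx.le _) hr0.le hx.le
  have hlow : N - 1 ≤ x :=
    ((strictMonoOn_rpow_mul_one_add (one_div_pos.2 hr0)).le_iff_le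
      (mem_Ici.2 (sub_pos.2 hN).le) (mem_Ici.2 hx.le)).1 hbound
  exact ⟨hlow, one_sub_one_div_le_div_one_add (by linarith) hlow⟩

theorem largePsi_lower_bound (r N Ψ V x : ℝ) (hr : 1 ≤ r) (hN : 1 < N)
    (hV : 0 < V) (hx : 0 < x)
    (heq : x ^ (1 / r) * (1 + x) ^ 2 / (1 + (1 + r) * x) = Ψ / V)
    (hk : N * (N - 1) ^ (1 / r) ≤ Ψ / V) :
    N - 1 ≤ x ∧ 1 - 1 / N ≤ x / (1 + x) :=
  largePsi_lower_bound_general r N Ψ V x hr hN hx heq hk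
end

section
/- Fix r ≥ 1 and suppose Ψ/V ≥ 2 where Ψ, V > 0. Then the equation s(1+s^r)² = (Ψ/V)(1+(1+r)s^r) has a unique solution s* in (1, ∞), and no solution in (0,1]. -/
/-!
Write `Φ = equilibriumMap r` as `Φ(s) = s · g(s^r)` with `g(a) = (1 + a)² / (1 + (1 + r) a)`.
Cross-multiplying, `g(b) - g(a)` has the sign of `(b - a)(2 + a + b + (1 + r)(ab - 1))`, so `g`
is monotone on `[1, ∞)`; hence `Φ` is strictly increasing there and `Φ(s) ≥ s · Φ(1)`, with
`Φ(1) = 4/(r + 2)`. As `4/(r + 2) < 2 ≤ Ψ/V`, the intermediate value theorem and monotonicity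
give exactly one root in `(1, ∞)`. On `(0, 1]` a direct estimate gives `Φ < 2`.
-/

open Real Set

noncomputable def equilibriumMap (r s : ℝ) : ℝ :=
  s * (1 + s ^ r) ^ 2 / (1 + (1 + r) * s ^ r)

section

variable {r s : ℝ}

lemma one_add_one_add_mul_rpow_pos (hr : -1 ≤ r) (hs : 0 < s) :
    0 < 1 + (1 + r) * s ^ r := by
  have : 0 ≤ (1 + r) * s ^ r := mul_nonneg (by linarith) (rpow_pos_of_pos hs r).le
  linarith

lemma monotoneOn_sq_one_add_div (hr : -1 ≤ r) :
    MonotoneOn (fun a : ℝ => (1 + a) ^ 2 / (1 + (1 + r) * a)) (Ici 1) := by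
  intro a (ha : 1 ≤ a) b (hb : 1 ≤ b) hab
  have hpos : ∀ x : ℝ, 1 ≤ x → 0 < 1 + (1 + r) * x := fun x hx => by nlinarith
  rw [div_le_div_iff₀ (hpos a ha) (hpos b hb)]
  have hab₁ : 1 ≤ a * b := one_le_mul_of_one_le_of_one_le ha hb
  have hfactor : 0 ≤ 2 + a + b + (1 + r) * (a * b - 1) := by
    nlinarith [mul_nonneg (by linarith : (0 : ℝ) ≤ 1 + r) (sub_nonneg.2 hab₁)]
  nlinarith [mul_nonneg (sub_nonneg.2 hab) hfactor]

lemma equilibriumMap_one : equilibriumMap r 1 = 4 / (2 + r) := by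
  norm_num [equilibriumMap]
  ring_nf

lemma equilibriumMap_eq_iff (hr : -1 ≤ r) (hs : 0 < s) (c : ℝ) :
    equilibriumMap r s = c ↔ s * (1 + s ^ r) ^ 2 = c * (1 + (1 + r) * s ^ r) :=
  div_eq_iff (one_add_one_add_mul_rpow_pos hr hs).ne'

lemma continuousOn_equilibriumMap (hr : -1 ≤ r) : ContinuousOn (equilibriumMap r) (Ioi 0) := by
  have hpow : ContinuousOn (fun s : ℝ => s ^ r) (Ioi 0) :=
    continuousOn_id.rpow_const fun x hx => Or.inl (ne_of_gt hx)
  exact (continuousOn_id.mul ((continuousOn_const.add hpow).pow 2)).div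
    (continuousOn_const.add (continuousOn_const.mul hpow))
    fun x hx => (one_add_one_add_mul_rpow_pos hr hx).ne'

lemma equilibriumMap_eq_mul (s : ℝ) :
    equilibriumMap r s = s * ((1 + s ^ r) ^ 2 / (1 + (1 + r) * s ^ r)) :=
  mul_div_assoc _ _ _

lemma strictMonoOn_equilibriumMap (hr : 0 ≤ r) : StrictMonoOn (equilibriumMap r) (Ici 1) := by
  intro s (hs : 1 ≤ s) t (ht : 1 ≤ t) hst
  have hsr : 1 ≤ s ^ r := one_le_rpow hs hr
  have hgs : 0 < (1 + s ^ r) ^ 2 / (1 + (1 + r) * s ^ r) := by positivity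
  have hg : (1 + s ^ r) ^ 2 / (1 + (1 + r) * s ^ r) ≤ (1 + t ^ r) ^ 2 / (1 + (1 + r) * t ^ r) :=
    monotoneOn_sq_one_add_div (by linarith) hsr (one_le_rpow ht hr)
      (rpow_le_rpow (by linarith) hst.le hr)
  rw [equilibriumMap_eq_mul, equilibriumMap_eq_mul]
  calc s * ((1 + s ^ r) ^ 2 / (1 + (1 + r) * s ^ r))
      < t * ((1 + s ^ r) ^ 2 / (1 + (1 + r) * s ^ r)) := mul_lt_mul_of_pos_right hst hgs
    _ ≤ t * ((1 + t ^ r) ^ 2 / (1 + (1 + r) * t ^ r)) := by gcongr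

lemma mul_equilibriumMap_one_le (hr : 0 ≤ r) (hs : 1 ≤ s) :
    s * equilibriumMap r 1 ≤ equilibriumMap r s := by
  rw [equilibriumMap_eq_mul, equilibriumMap_eq_mul, one_rpow]
  gcongr
  simpa only [one_mul] using
    monotoneOn_sq_one_add_div (by linarith) self_mem_Ici (one_le_rpow hs hr) (one_le_rpow hs hr)

lemma equilibriumMap_lt_two (hr : 0 < r) (hs₀ : 0 < s) (hs₁ : s ≤ 1) :
    equilibriumMap r s < 2 := by
  have ha₀ : 0 < s ^ r := rpow_pos_of_pos hs₀ r
  have ha₁ : s ^ r ≤ 1 := rpow_le_one hs₀.le hs₁ hr.le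
  rw [equilibriumMap, div_lt_iff₀ (one_add_one_add_mul_rpow_pos (by linarith) hs₀)]
  calc s * (1 + s ^ r) ^ 2 ≤ (1 + s ^ r) ^ 2 := mul_le_of_le_one_left (by positivity) hs₁
    _ < 2 * (1 + (1 + r) * s ^ r) := by nlinarith [mul_pos hr ha₀]

lemma existsUnique_equilibriumMap_eq (hr : 0 ≤ r) {c : ℝ} (hc : equilibriumMap r 1 < c) :
    ∃! s, 1 < s ∧ equilibriumMap r s = c := by
  have hΦ₁ : 0 < equilibriumMap r 1 := by rw [equilibriumMap_one]; positivity
  set M := c / equilibriumMap r 1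
  have hM : 1 < M := (one_lt_div hΦ₁).2 hc
  have hcM : c ≤ equilibriumMap r M := by
    simpa [M, div_mul_cancel₀ c hΦ₁.ne'] using mul_equilibriumMap_one_le hr hM.le
  obtain ⟨s, hsIcc, hsc⟩ := intermediate_value_Icc hM.le
    ((continuousOn_equilibriumMap (by linarith)).mono fun x hx => zero_lt_one.trans_le hx.1)
    ⟨hc.le, hcM⟩
  have hs : 1 < s := hsIcc.1.lt_of_ne (by rintro rfl; exact hc.ne hsc)
  refine ⟨s, ⟨hs, hsc⟩, fun t ⟨ht, htc⟩ => ?_⟩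
  exact (strictMonoOn_equilibriumMap hr).injOn (mem_Ici.2 ht.le) (mem_Ici.2 hs.le)
    (htc.trans hsc.symm)

end

theorem unique_equilibrium_ratio (r Ψ V : ℝ) (hr : 1 ≤ r) (hV : 0 < V)
    (hΨ : 2 * V ≤ Ψ) :
    (∃! s : ℝ, 1 < s ∧
        s * (1 + s ^ r) ^ 2 = (Ψ / V) * (1 + (1 + r) * s ^ r)) ∧
    (∀ s : ℝ, 0 < s → s ≤ 1 →
        s * (1 + s ^ r) ^ 2 ≠ (Ψ / V) * (1 + (1 + r) * s ^ r)) := by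
  have hc : 2 ≤ Ψ / V := (le_div_iff₀ hV).2 (by linarith)
  have hΦ₁ : equilibriumMap r 1 < Ψ / V := by
    rw [equilibriumMap_one, div_lt_iff₀ (by linarith)]
    nlinarith
  constructor
  · refine (existsUnique_congr fun s => ?_).1 (existsUnique_equilibriumMap_eq (by linarith) hΦ₁)
    exact and_congr_right fun hs => equilibriumMap_eq_iff (by linarith) (by linarith) _
  · intro s hs₀ hs₁ hs
    rw [← equilibriumMap_eq_iff (by linarith) hs₀] at hs
    exact (equilibriumMap_lt_two (by linarith) hs₀ hs₁).not_ge (hs ▸ hc)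
end

section
/- Fix r ≥ 1 and define Φ(s) = s(1+s^r)²/(1+(1+r)s^r). Then Φ(s) < 2 for all s ∈ (0,1]. -/
open Real

theorem mul_one_add_sq_lt_two_mul {s x r : ℝ} (hs : s ≤ 1) (hx0 : 0 < x) (hx1 : x ≤ 1)
    (hr : 0 < r) : s * (1 + x) ^ 2 < 2 * (1 + (1 + r) * x) :=
  calc s * (1 + x) ^ 2
      ≤ (1 + x) ^ 2 := mul_le_of_le_one_left (sq_nonneg _) hs
    _ = (1 + x) * (1 + x) := sq _
    _ ≤ 2 * (1 + x) := by gcongr; linarith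
    _ < 2 * (1 + (1 + r) * x) := by linarith [mul_pos hr hx0]

theorem phi_lt_two_on_Ioc (r : ℝ) (hr : 1 ≤ r) (s : ℝ) (hs0 : 0 < s) (hs1 : s ≤ 1) :
    s * (1 + s ^ r) ^ 2 / (1 + (1 + r) * s ^ r) < 2 := by
  have hr0 : 0 < r := by linarith
  have hx0 : 0 < s ^ r := rpow_pos_of_pos hs0 r
  have hx1 : s ^ r ≤ 1 := rpow_le_one hs0.le hs1 hr0.le
  rw [div_lt_iff₀ (by positivity)]
  exact mul_one_add_sq_lt_two_mul hs1 hx0 hx1 hr0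
end

section
/- Fix r ≥ 1 and Ψ ≥ 2V with V > 0. Let s* > 1 solve s(1+s^r)² = (Ψ/V)(1+(1+r)s^r), and set x = (s*)^r, P_I* = x/(1+x), P_B* = 1/(1+x), b_B* = r P_I* V/(1+r P_I*), b_I* = s* b_B*, and T* = b_I* + P_B* b_B*. Then T* > (r/(r+2))·V. -/
/-!
Since `s > 1`, the interior share `P_I = x / (1 + x)` with `x = s ^ r > 1` exceeds `1 / 2`.
The map `p ↦ r p V / (1 + r p)` is increasing and equals `r V / (r + 2)` at `p = 1 / 2`, so
`b_B > r V / (r + 2)`; finally `T = s b_B + P_B b_B > b_B` because `s > 1` and `P_B b_B > 0`.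
-/

open Real

lemma one_half_lt_div_one_add {x : ℝ} (hx : 1 < x) : 1 / 2 < x / (1 + x) := by
  rw [lt_div_iff₀ (by linarith)]
  linarith

lemma div_add_two_mul_lt_mul_div_one_add_mul {r V p : ℝ} (hr : 0 < r) (hV : 0 < V)
    (hp : 1 / 2 < p) : r / (r + 2) * V < r * p * V / (1 + r * p) := by
  have hrp : 0 < r * p := mul_pos hr (by linarith)
  rw [div_mul_eq_mul_div, div_lt_div_iff₀ (by linarith) (by linarith)]
  nlinarith [mul_pos (mul_pos hr hV) (by linarith : (0 : ℝ) < 2 * p - 1)]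

lemma lt_mul_add_mul_of_one_lt {s b q : ℝ} (hs : 1 < s) (hb : 0 < b) (hq : 0 < q) :
    b < s * b + q * b := by
  nlinarith [mul_pos hq hb]

theorem total_expenditure_lower_bound_general (r V s : ℝ) (hr : 1 ≤ r) (hV : 0 < V)
    (hs : 1 < s) :
    let x := s ^ r
    let PI := x / (1 + x)
    let PB := 1 / (1 + x)
    let bB := r * PI * V / (1 + r * PI)
    let bI := s * bB
    let T := bI + PB * bB
    r / (r + 2) * V < T := by
  intro x PI PB bB bI T
  have hr0 : 0 < r := by linarith
  have hx : 1 < x := one_lt_rpow hs hr0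
  have hPI : 1 / 2 < PI := one_half_lt_div_one_add hx
  have hbB : r / (r + 2) * V < bB := div_add_two_mul_lt_mul_div_one_add_mul hr0 hV hPI
  have hPB : 0 < PB := by positivity
  calc r / (r + 2) * V < bB := hbB
    _ < s * bB + PB * bB := lt_mul_add_mul_of_one_lt hs (lt_trans (by positivity) hbB) hPB

theorem total_expenditure_lower_bound (r Ψ V s : ℝ) (hr : 1 ≤ r) (hV : 0 < V)
    (hΨ : 2 * V ≤ Ψ) (hs : 1 < s)
    (heq : s * (1 + s ^ r) ^ 2 = (Ψ / V) * (1 + (1 + r) * s ^ r)) :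
    let x := s ^ r
    let PI := x / (1 + x)
    let PB := 1 / (1 + x)
    let bB := r * PI * V / (1 + r * PI)
    let bI := s * bB
    let T := bI + PB * bB
    r / (r + 2) * V < T :=
  total_expenditure_lower_bound_general r V s hr hV hs
end

section
/- Fix r ≥ 1 and V > 0. If x > 0 satisfies x^(1/r)(1+x)²/(1+(1+r)x) = Ψ/V with Ψ ≥ 2V, then x > r − 1; equivalently P_B* = 1/(1+x) < 1/r. -/
open Real

theorem x_gt_r_sub_one (r Ψ V x : ℝ) (hr : 1 ≤ r) (hV : 0 < V)
    (hΨ : 2 * V ≤ Ψ) (hx : 0 < x)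
    (heq : x ^ (1 / r) * (1 + x) ^ 2 / (1 + (1 + r) * x) = Ψ / V) :
    r - 1 < x ∧ 1 / (1 + x) < 1 / r := by
  have hr0 : 0 < r := lt_of_lt_of_le one_pos hr
  have hmain : r - 1 < x := by
    by_contra h
    push_neg at h
    -- x ≤ r - 1
    have hd : (0:ℝ) < 1 + (1 + r) * x := by nlinarith
    have hrp : (0:ℝ) ≤ x ^ (1 / r) := Real.rpow_nonneg hx.le _
    -- show x < 2 ^ r
    have hlog : (0.6931471803 : ℝ) < Real.log 2 := Real.log_two_gt_d9
    have hexp1 : (2.7182818283 : ℝ) < Real.exp 1 := Real.exp_one_gt_d9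
    have h1 : Real.log 2 * r - 1 + 1 ≤ Real.exp (Real.log 2 * r - 1) :=
      Real.add_one_le_exp _
    have h2 : Real.exp (Real.log 2 * r - 1) * Real.exp 1 = Real.exp (Real.log 2 * r) := by
      rw [← Real.exp_add]; ring_nf
    have h2r : (2:ℝ) ^ r = Real.exp (Real.log 2 * r) :=
      Real.rpow_def_of_pos two_pos r
    have he : (0:ℝ) < Real.exp 1 := Real.exp_pos 1
    have h3 : Real.log 2 * r * Real.exp 1 ≤ Real.exp (Real.log 2 * r) := by
      rw [← h2]
      exact mul_le_mul_of_nonneg_right (by linarith) he.le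
    have hc : (1.88:ℝ) < Real.log 2 * Real.exp 1 := by nlinarith
    have hx2r : x < (2:ℝ) ^ r := by
      rw [h2r]
      nlinarith [mul_lt_mul_of_pos_right hc hr0]
    have hxr2 : x ^ (1 / r) < 2 := by
      have := Real.rpow_lt_rpow hx.le hx2r (by positivity : (0:ℝ) < 1 / r)
      rwa [← Real.rpow_mul (by norm_num : (0:ℝ) ≤ 2),
        show (r : ℝ) * (1 / r) = 1 from by field_simp, Real.rpow_one] at this
    have hle1 : x ^ (1 / r) * (1 + x) ^ 2 / (1 + (1 + r) * x) ≤ x ^ (1 / r) := by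
      rw [div_le_iff₀ hd]
      nlinarith [mul_le_mul_of_nonneg_left (show (1+x)^2 ≤ 1+(1+r)*x by nlinarith) hrp]
    have hge2 : (2:ℝ) ≤ Ψ / V := (le_div_iff₀ hV).mpr (by linarith)
    linarith [heq ▸ hle1]
  refine ⟨hmain, ?_⟩
  have h1x : (0:ℝ) < 1 + x := by linarith
  rw [div_lt_div_iff₀ h1x hr0]
  linarith
end

section
/- Fix r ≥ 1, V > 0, Ψ ≥ 2V, and let s* > 1 solve the equilibrium equation s(1+s^r)² = (Ψ/V)(1+(1+r)s^r). With x = (s*)^r, P_I* = x/(1+x), P_B* = 1/(1+x), and b_I* = Ψ r P_I* P_B*, the issuer's gross equilibrium payoff Ψ P_I* − b_I* = Ψ P_I*(1 − r P_B*) is strictly positive. -/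
open Real

theorem issuer_gross_payoff_pos (r Ψ V s : ℝ) (hr : 1 ≤ r) (hV : 0 < V)
    (hΨ : 2 * V ≤ Ψ) (hs : 1 < s)
    (heq : s * (1 + s ^ r) ^ 2 = (Ψ / V) * (1 + (1 + r) * s ^ r)) :
    let x := s ^ r
    let PI := x / (1 + x)
    let PB := 1 / (1 + x)
    let bI := Ψ * r * PI * PB
    0 < Ψ * PI - bI ∧ Ψ * PI - bI = Ψ * PI * (1 - r * PB) := by
  intro x PI PB bI
  have hr0 : (0:ℝ) < r := by linarith
  have hx1 : 1 < x := by
    have := (Real.one_lt_rpow_iff_of_pos (by linarith : (0:ℝ) < s)).mpr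
      (Or.inl ⟨hs, hr0⟩)
    simpa [x] using this
  have hxpos : (0:ℝ) < 1 + x := by linarith
  have hΨV : (2:ℝ) ≤ Ψ / V := (le_div_iff₀ hV).mpr (by linarith)
  -- Bernoulli
  have hbern : 1 + r * (s - 1) ≤ x := by
    have := one_add_mul_self_le_rpow_one_add (by linarith : (-1:ℝ) ≤ s - 1) hr
    simpa [x] using this
  -- key: r < 1 + x
  have hkey : r < 1 + x := by
    by_contra h
    push_neg at h
    have h1 : (1 + x) * (s - 1) ≤ x - 1 := by nlinarith [h, hbern]
    have h2 : s * (1 + x) ^ 2 ≤ 2 * x * (1 + x) := by nlinarith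
    have h3 : 2 * (1 + (1 + r) * x) ≤ s * (1 + x) ^ 2 := by
      have hpos : (0:ℝ) < 1 + (1 + r) * x := by nlinarith
      calc 2 * (1 + (1 + r) * x) ≤ (Ψ / V) * (1 + (1 + r) * x) := by nlinarith
        _ = s * (1 + x) ^ 2 := heq.symm
    nlinarith
  have hΨ0 : 0 < Ψ := by linarith
  have hPI : 0 < PI := div_pos (by linarith) hxpos
  have hfac : 0 < 1 - r * PB := by
    have : r * PB < 1 := by
      rw [show PB = 1 / (1 + x) from rfl]
      rw [mul_one_div, div_lt_one hxpos]
      exact hkey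
    linarith
  have heqn : Ψ * PI - bI = Ψ * PI * (1 - r * PB) := by
    show Ψ * PI - Ψ * r * PI * PB = Ψ * PI * (1 - r * PB)
    ring
  refine ⟨?_, heqn⟩
  rw [heqn]
  positivity
end

section
/- Fix r ≥ 1. Define for x > 0 the quantity T*/V = [r x/(1+(1+r)x)]·(s + 1/(1+x)) where x = s^r and s = s*(k) is the unique solution in (1,∞) of s(1+s^r)² = k(1+(1+r)s^r). Then T*/V → ∞ as k → ∞. -/
open Real Filter

lemma mev_aux_lower (r x s : ℝ) (hr : 1 ≤ r) (hs1 : 1 < s) (hx : 1 < x) :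
    s / 3 ≤ r * x / (1 + (1 + r) * x) * (s + 1 / (1 + x)) := by
  have hden : (0:ℝ) < 1 + (1 + r) * x := by nlinarith
  have h1 : (1:ℝ) / 3 ≤ r * x / (1 + (1 + r) * x) := by
    rw [le_div_iff₀ hden]; nlinarith
  have h2 : s ≤ s + 1 / (1 + x) := by
    have : (0:ℝ) ≤ 1 / (1 + x) := by positivity
    linarith
  calc s / 3 = 1 / 3 * s := by ring
    _ ≤ r * x / (1 + (1 + r) * x) * (s + 1 / (1 + x)) :=
        mul_le_mul h1 h2 (by linarith) (le_trans (by norm_num) h1)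

theorem mev_tax_tendsto_atTop (r : ℝ) (hr : 1 ≤ r) (s : ℝ → ℝ)
    (hs : ∀ k : ℝ, 2 ≤ k → 1 < s k ∧
        s k * (1 + s k ^ r) ^ 2 = k * (1 + (1 + r) * s k ^ r)) :
    Filter.Tendsto
      (fun k : ℝ =>
        r * (s k ^ r) / (1 + (1 + r) * s k ^ r) * (s k + 1 / (1 + s k ^ r)))
      Filter.atTop Filter.atTop := by
  have hxgt : ∀ k : ℝ, 2 ≤ k → 1 < s k ^ r := by
    intro k hk
    have h1 := (hs k hk).1
    exact (Real.one_lt_rpow_iff_of_pos (by linarith)).mpr (Or.inl ⟨h1, by linarith⟩)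
  -- s tends to atTop
  have hstop : Tendsto s atTop atTop := by
    rw [tendsto_atTop]
    intro M
    set M' := max M 2 with hM'
    have hM'2 : (2:ℝ) ≤ M' := le_max_right _ _
    filter_upwards [eventually_ge_atTop (max 2 (M' * (1 + M' ^ r) ^ 2 + 1))] with k hk
    have hk2 : (2:ℝ) ≤ k := le_trans (le_max_left _ _) hk
    have hkM : M' * (1 + M' ^ r) ^ 2 + 1 ≤ k := le_trans (le_max_right _ _) hk
    obtain ⟨h1, heq⟩ := hs k hk2
    have hx := hxgt k hk2
    by_contra hcon
    push_neg at hcon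
    have hsM : s k ≤ M' := le_trans hcon.le (le_max_left _ _)
    have hxM : s k ^ r ≤ M' ^ r :=
      Real.rpow_le_rpow (by linarith) hsM (by linarith)
    have hM'x : 1 < M' ^ r := lt_of_lt_of_le hx hxM
    have hsq : (1 + s k ^ r) ^ 2 ≤ (1 + M' ^ r) ^ 2 := by nlinarith
    have hlhs : s k * (1 + s k ^ r) ^ 2 ≤ M' * (1 + M' ^ r) ^ 2 :=
      mul_le_mul hsM hsq (by positivity) (by linarith)
    have hone : (1:ℝ) ≤ 1 + (1 + r) * s k ^ r := by nlinarith
    have hrhs : k ≤ k * (1 + (1 + r) * s k ^ r) :=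
      le_mul_of_one_le_right (by linarith) hone
    linarith [heq ▸ hrhs]
  have hdiv : Tendsto (fun k => s k / 3) atTop atTop :=
    hstop.atTop_div_const (by norm_num)
  refine tendsto_atTop_mono' atTop ?_ hdiv
  filter_upwards [eventually_ge_atTop (2:ℝ)] with k hk
  exact mev_aux_lower r (s k ^ r) (s k) hr (hs k hk).1 (hxgt k hk)
end
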